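/- arXiv:2407.06289 — 4 statements merged into one kernel-verified Lean document; each statement's English description precedes it below -/
import Mathlib

section
/- Let p be an odd prime and ξ₃, ξ₄ ∈ ℚₚ/ℤₚ (identified with representatives of negative valuation or 0). Define f(x₂,x₃) := ∫_{ℤₚ} e^{2πi{(ξ₃x₂+ξ₄x₃)u + ξ₄x₂u²/2}ₚ} du. Then ∫_{ℤₚ²} |f(x₂,x₃)|² dx₂dx₃ = max{|ξ₃|ₚ, |ξ₄|ₚ}^{−1}. -/
/-!
Write `M = max {|ξ₃|ₚ, |ξ₄|ₚ, 1}`. Expanding `|f(x)|² = ∬ e(φ(x,u) - φ(x,v)) du dv` and integrating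
in `x` first, the phase difference is linear in `x`:
`φ(x,u) - φ(x,v) = (ξ₃ w + ξ₄ w (u+v)/2) x₂ + ξ₄ w x₃` with `w = u - v`. By orthogonality,
`∫_{ℤₚ} e(c t) dt` is `1` if `|c|ₚ ≤ 1` and `0` otherwise, so the `x`-integral is the indicator of
both coefficients being integral. As `|2|ₚ = 1`, the ultrametric inequality turns this into
`M |u - v|ₚ ≤ 1`. Since `M = pᵏ`, the set `{|u - v|ₚ ≤ p⁻ᵏ}` is fibred over `u` by cosets of the
index-`pᵏ` subgroup `pᵏℤₚ`, so it has measure `p⁻ᵏ = M⁻¹`.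
-/

open MeasureTheory Metric
open scoped ComplexConjugate ENNReal

theorem continuous_of_map_add_of_norm_le_one {G M : Type*} [SeminormedAddCommGroup G]
    [MulOneClass M] [TopologicalSpace M] {e : G → M} (he_add : ∀ x y, e (x + y) = e x * e y)
    (he_one : ∀ x, ‖x‖ ≤ 1 → e x = 1) : Continuous e := by
  refine continuous_iff_continuousAt.2 fun x => (continuousAt_const (y := e x)).congr ?_
  filter_upwards [closedBall_mem_nhds x one_pos] with y hy
  rw [mem_closedBall, dist_eq_norm] at hy
  rw [← add_sub_cancel x y, he_add, he_one _ hy, mul_one]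

theorem conj_eq_map_neg {G : Type*} [AddGroup G] {e : G → ℂ} (he_add : ∀ x y, e (x + y) = e x * e y)
    (he_zero : e 0 = 1) (he_abs : ∀ x, ‖e x‖ = 1) (x : G) : conj (e x) = e (-x) := by
  rw [← Complex.inv_eq_conj (he_abs x)]
  exact inv_eq_of_mul_eq_one_right (by rw [← he_add, add_neg_cancel, he_zero])

theorem integral_eq_zero_of_map_add_eq_mul {G 𝕜 : Type*} [RCLike 𝕜] [AddGroup G] [MeasurableSpace G]
    [MeasurableAdd G] {μ : Measure G} [μ.IsAddLeftInvariant] {f : G → 𝕜} {a : G}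
    (hf : ∀ x, f (a + x) = f a * f x) (ha : f a ≠ 1) : ∫ x, f x ∂μ = 0 := by
  have h : ∫ x, f x ∂μ = f a * ∫ x, f x ∂μ := by
    calc ∫ x, f x ∂μ = ∫ x, f (a + x) ∂μ := (integral_add_left_eq_self f a).symm
      _ = f a * ∫ x, f x ∂μ := by simp_rw [hf, integral_const_mul]
  by_contra hI
  exact ha (mul_right_cancel₀ hI (h.symm.trans (one_mul _).symm))

theorem integral_norm_integral_sq {X U : Type*} [MeasurableSpace X] [MeasurableSpace U]
    {ν : Measure X} {μ : Measure U} [SFinite ν] [SFinite μ] {g : X → U → ℂ}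
    (hg : Integrable (fun q : X × (U × U) => g q.1 q.2.1 * conj (g q.1 q.2.2))
      (ν.prod (μ.prod μ))) :
    ∫ x, ‖∫ u, g x u ∂μ‖ ^ 2 ∂ν =
      (∫ w : U × U, ∫ x, g x w.1 * conj (g x w.2) ∂ν ∂(μ.prod μ)).re := by
  have hsq : ∀ x, ‖∫ u, g x u ∂μ‖ ^ 2 = (∫ w : U × U, g x w.1 * conj (g x w.2) ∂(μ.prod μ)).re := by
    intro x
    rw [integral_prod_mul (g x) (fun u => conj (g x u)), integral_conj, Complex.mul_conj',
      ← Complex.ofReal_pow, Complex.ofReal_re]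
  simp_rw [hsq]
  exact (integral_re hg.integral_prod_left).trans (congrArg Complex.re (integral_integral_swap hg))

theorem IsUltrametricDist.norm_le_one_and_norm_le_one_iff {K : Type*} [NormedField K]
    [IsUltrametricDist K] {a b w s : K} (hw : ‖w‖ ≤ 1) (hs : ‖s‖ ≤ 1) :
    ‖a * w + b * w * s‖ ≤ 1 ∧ ‖b * w‖ ≤ 1 ↔ max (max ‖a‖ ‖b‖) 1 * ‖w‖ ≤ 1 := by
  have hbws : ‖b * w * s‖ ≤ ‖b * w‖ := by
    rw [norm_mul (b * w)]; exact mul_le_of_le_one_right (norm_nonneg _) hs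
  simp only [max_mul_of_nonneg _ _ (norm_nonneg w), one_mul, ← norm_mul, max_le_iff]
  constructor
  · rintro ⟨hc, hb⟩
    refine ⟨⟨?_, hb⟩, hw⟩
    calc ‖a * w‖ = ‖(a * w + b * w * s) + -(b * w * s)‖ := by rw [add_neg_cancel_right]
      _ ≤ 1 := (norm_add_le_max _ _).trans (max_le hc ((norm_neg _).trans_le (hbws.trans hb)))
  · rintro ⟨⟨ha, hb⟩, -⟩
    exact ⟨(norm_add_le_max _ _).trans (max_le ha (hbws.trans hb)), hb⟩

namespace Padic

variable {p : ℕ} [Fact p.Prime]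

theorem norm_two_eq_one (hp : Odd p) : ‖(2 : ℚ_[p])‖ = 1 := by
  exact_mod_cast norm_natCast_eq_one_iff.2 hp.coprime_two_right

theorem exists_max_norm_one_eq_pow (x : ℚ_[p]) : ∃ k : ℕ, max ‖x‖ 1 = (p : ℝ) ^ k := by
  rcases eq_or_ne x 0 with rfl | hx
  · exact ⟨0, by simp⟩
  refine ⟨(-x.valuation).toNat, ?_⟩
  have hp : (1 : ℝ) ≤ p := by exact_mod_cast (Fact.out : p.Prime).one_le
  rw [norm_eq_zpow_neg_valuation hx, ← zpow_natCast, Int.toNat_eq_max,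
    (zpow_right_mono₀ hp).map_max, zpow_zero]

theorem exists_max_max_norm_one_eq_pow (x y : ℚ_[p]) :
    ∃ k : ℕ, max (max ‖x‖ ‖y‖) 1 = (p : ℝ) ^ k := by
  obtain ⟨k, hk⟩ := exists_max_norm_one_eq_pow x
  obtain ⟨l, hl⟩ := exists_max_norm_one_eq_pow y
  have hp : (1 : ℝ) ≤ p := by exact_mod_cast (Fact.out : p.Prime).one_le
  refine ⟨max k l, ?_⟩
  rw [(pow_right_mono₀ hp).map_max, ← hk, ← hl, max_max_max_comm, max_self]

end Padic

namespace PadicInt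

variable {p : ℕ} [Fact p.Prime]

noncomputable def quadraticPhase (ξ₃ ξ₄ : ℚ_[p]) (x : ℤ_[p] × ℤ_[p]) (u : ℤ_[p]) : ℚ_[p] :=
  (ξ₃ * (x.1 : ℚ_[p]) + ξ₄ * (x.2 : ℚ_[p])) * (u : ℚ_[p]) + ξ₄ * (x.1 : ℚ_[p]) * (u : ℚ_[p]) ^ 2 / 2

theorem quadraticPhase_sub_quadraticPhase (ξ₃ ξ₄ : ℚ_[p]) (x : ℤ_[p] × ℤ_[p]) (u v : ℤ_[p]) :
    quadraticPhase ξ₃ ξ₄ x u - quadraticPhase ξ₃ ξ₄ x v =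
      (ξ₃ * (u - v : ℚ_[p]) + ξ₄ * (u - v : ℚ_[p]) * ((u + v : ℚ_[p]) / 2)) * x.1 +
        ξ₄ * (u - v : ℚ_[p]) * x.2 := by
  unfold quadraticPhase; ring

section Haar

variable [MeasurableSpace ℤ_[p]] [BorelSpace ℤ_[p]] {μ : Measure ℤ_[p]}
  [μ.IsAddLeftInvariant] [IsProbabilityMeasure μ]

theorem integral_map_mul_eq_ite {e : ℚ_[p] → ℂ} (he_add : ∀ x y, e (x + y) = e x * e y)
    (he_ker : ∀ x, e x = 1 ↔ ‖x‖ ≤ 1) (c : ℚ_[p]) :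
    ∫ u : ℤ_[p], e (c * u) ∂μ = if ‖c‖ ≤ 1 then 1 else 0 := by
  split_ifs with hc
  · have h1 : ∀ u : ℤ_[p], e (c * u) = 1 := fun u => (he_ker _).2 <| by
      rw [norm_mul]; exact mul_le_one₀ hc (norm_nonneg _) u.norm_le_one
    simp [h1]
  · refine integral_eq_zero_of_map_add_eq_mul (a := 1) (fun u => ?_) ?_
    · rw [← he_add, coe_add, mul_add]
    · simpa [he_ker] using hc

theorem measure_closedBall_pow (k : ℕ) (a : ℤ_[p]) :
    μ (closedBall a ((p : ℝ) ^ (-(k : ℤ)))) = ((p : ℝ≥0∞) ^ k)⁻¹ := by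
  set H := (toZModPow (p := p) k).toAddMonoidHom.ker
  have hH : (H : Set ℤ_[p]) = closedBall 0 ((p : ℝ) ^ (-(k : ℤ))) := by
    ext x
    rw [mem_closedBall_zero_iff, norm_le_pow_iff_mem_span_pow, ← ker_toZModPow]
    rfl
  have hindex : H.index = p ^ k := by
    rw [AddSubgroup.index_ker, AddMonoidHom.range_eq_top.2 (ZMod.ringHom_surjective _),
      AddSubgroup.card_top, Nat.card_zmod]
  have : H.FiniteIndex := ⟨by rw [hindex]; exact pow_ne_zero k (Fact.out : p.Prime).ne_zero⟩
  have hmeas := H.index_mul_measure (hH ▸ isClosed_closedBall.measurableSet) μ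
  rw [hindex, measure_univ, hH, Nat.cast_pow, mul_comm] at hmeas
  have hball : closedBall a ((p : ℝ) ^ (-(k : ℤ))) =
      (-a + ·) ⁻¹' closedBall 0 ((p : ℝ) ^ (-(k : ℤ))) := by
    rw [preimage_add_closedBall, zero_sub, neg_neg]
  rw [hball, measure_preimage_add, ← ENNReal.eq_inv_of_mul_eq_one_left hmeas]

theorem measure_prod_dist_le_pow (k : ℕ) :
    (μ.prod μ) {w : ℤ_[p] × ℤ_[p] | dist w.1 w.2 ≤ (p : ℝ) ^ (-(k : ℤ))} = ((p : ℝ≥0∞) ^ k)⁻¹ := by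
  rw [Measure.prod_apply (measurableSet_le (by fun_prop) measurable_const)]
  have hslice : ∀ u : ℤ_[p], Prod.mk u ⁻¹' {w : ℤ_[p] × ℤ_[p] | dist w.1 w.2 ≤ (p : ℝ) ^ (-(k : ℤ))}
      = closedBall u ((p : ℝ) ^ (-(k : ℤ))) := fun u => by ext v; simp [dist_comm]
  simp_rw [hslice, measure_closedBall_pow, lintegral_const, measure_univ, mul_one]

theorem integral_ite_dist_le_pow (k : ℕ) :
    ∫ w : ℤ_[p] × ℤ_[p], (if dist w.1 w.2 ≤ (p : ℝ) ^ (-(k : ℤ)) then (1 : ℂ) else 0) ∂(μ.prod μ) =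
      (((p : ℝ) ^ (-(k : ℤ)) : ℝ) : ℂ) := by
  set S := {w : ℤ_[p] × ℤ_[p] | dist w.1 w.2 ≤ (p : ℝ) ^ (-(k : ℤ))}
  have hind : ∀ w, (if dist w.1 w.2 ≤ (p : ℝ) ^ (-(k : ℤ)) then (1 : ℂ) else 0) =
      S.indicator (fun _ => 1) w := fun w => by simp [S, Set.indicator_apply]
  simp_rw [hind]
  rw [integral_indicator_const _ (measurableSet_le (by fun_prop) measurable_const), measureReal_def,
    measure_prod_dist_le_pow, ENNReal.toReal_inv, ENNReal.toReal_pow, ENNReal.toReal_natCast,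
    Complex.real_smul, mul_one, zpow_neg, zpow_natCast]

theorem integral_quadraticPhase_mul_conj (hp : Odd p) {e : ℚ_[p] → ℂ}
    (he_add : ∀ x y, e (x + y) = e x * e y) (he_abs : ∀ x, ‖e x‖ = 1)
    (he_ker : ∀ x, e x = 1 ↔ ‖x‖ ≤ 1) (ξ₃ ξ₄ : ℚ_[p]) (u v : ℤ_[p]) :
    ∫ x, e (quadraticPhase ξ₃ ξ₄ x u) * conj (e (quadraticPhase ξ₃ ξ₄ x v)) ∂(μ.prod μ) =
      if dist u v ≤ (max (max ‖ξ₃‖ ‖ξ₄‖) 1)⁻¹ then 1 else 0 := by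
  have he_zero : e 0 = 1 := (he_ker 0).2 (by simp)
  simp_rw [conj_eq_map_neg he_add he_zero he_abs, ← he_add, ← sub_eq_add_neg,
    quadraticPhase_sub_quadraticPhase, he_add]
  rw [integral_prod_mul (fun t : ℤ_[p] => e (_ * t)) (fun t : ℤ_[p] => e (_ * t)),
    integral_map_mul_eq_ite he_add he_ker, integral_map_mul_eq_ite he_add he_ker, ite_zero_mul_ite_zero,
    mul_one]
  have hw : ‖(u - v : ℚ_[p])‖ ≤ 1 := by exact_mod_cast (u - v).norm_le_one
  have hs : ‖(u + v : ℚ_[p]) / 2‖ ≤ 1 := by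
    rw [norm_div, Padic.norm_two_eq_one hp, div_one]; exact_mod_cast (u + v).norm_le_one
  have hM : 0 < max (max ‖ξ₃‖ ‖ξ₄‖) 1 := lt_max_of_lt_right one_pos
  refine if_congr ?_ rfl rfl
  rw [IsUltrametricDist.norm_le_one_and_norm_le_one_iff hw hs, ← le_inv_mul_iff₀ hM, mul_one]
  rfl

end Haar

end PadicInt

open PadicInt in
theorem padic_oscillatory_L2_norm_general (p : ℕ) [Fact p.Prime] (hp : Odd p)
    [MeasurableSpace ℤ_[p]] [BorelSpace ℤ_[p]]
    (μ : Measure ℤ_[p])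
    (hμ_inv : ∀ (a : ℤ_[p]) (s : Set ℤ_[p]), μ ((a + ·) ⁻¹' s) = μ s)
    (hμ_norm : μ Set.univ = 1)
    (e : ℚ_[p] → ℂ)
    (he_add : ∀ x y, e (x + y) = e x * e y)
    (he_abs : ∀ x, ‖e x‖ = 1)
    (he_ker : ∀ x, e x = 1 ↔ ‖x‖ ≤ 1)
    (ξ₃ ξ₄ : ℚ_[p]) :
    ∫ x : ℤ_[p] × ℤ_[p],
        ‖∫ u : ℤ_[p],
          e ((ξ₃ * (x.1 : ℚ_[p]) + ξ₄ * (x.2 : ℚ_[p])) * (u : ℚ_[p]) +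
            ξ₄ * (x.1 : ℚ_[p]) * (u : ℚ_[p]) ^ 2 / 2) ∂μ‖ ^ 2
        ∂(μ.prod μ) = (max (max ‖ξ₃‖ ‖ξ₄‖) 1)⁻¹ := by
  have : IsProbabilityMeasure μ := ⟨hμ_norm⟩
  have : μ.IsAddLeftInvariant := (forall_measure_preimage_add_iff μ).1 fun a s _ => hμ_inv a s
  have he : Continuous e := continuous_of_map_add_of_norm_le_one he_add fun x => (he_ker x).2
  have hint : Integrable (fun q : (ℤ_[p] × ℤ_[p]) × ℤ_[p] × ℤ_[p] =>
      e (quadraticPhase ξ₃ ξ₄ q.1 q.2.1) * conj (e (quadraticPhase ξ₃ ξ₄ q.1 q.2.2)))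
      ((μ.prod μ).prod (μ.prod μ)) :=
    (by unfold quadraticPhase; fun_prop : Continuous _).integrable_of_hasCompactSupport
      (.of_compactSpace _)
  obtain ⟨k, hk⟩ := Padic.exists_max_max_norm_one_eq_pow ξ₃ ξ₄
  have hr : (max (max ‖ξ₃‖ ‖ξ₄‖) 1)⁻¹ = (p : ℝ) ^ (-(k : ℤ)) := by rw [hk, zpow_neg, zpow_natCast]
  change ∫ x, ‖∫ u, e (quadraticPhase ξ₃ ξ₄ x u) ∂μ‖ ^ 2 ∂(μ.prod μ) = _
  rw [integral_norm_integral_sq (g := fun x u => e (quadraticPhase ξ₃ ξ₄ x u)) hint]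
  simp_rw [integral_quadraticPhase_mul_conj hp he_add he_abs he_ker, hr, integral_ite_dist_le_pow,
    Complex.ofReal_re]

/-- for an odd prime `p` and canonical representatives
`ξ₃, ξ₄ ∈ ℚₚ` of classes in `ℚₚ/ℤₚ` (each is `0` or has norm `≥ 1`, with the
convention `|0|ₚ := 1`), the function
`f(x₂,x₃) := ∫_{ℤₚ} e^{2πi{(ξ₃x₂+ξ₄x₃)u + ξ₄x₂u²/2}ₚ} du` satisfies
`∫_{ℤₚ²} |f|² = max{|ξ₃|ₚ, |ξ₄|ₚ}⁻¹`. -/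
theorem padic_oscillatory_L2_norm (p : ℕ) [Fact p.Prime] (hp : Odd p)
    [MeasurableSpace ℤ_[p]] [BorelSpace ℤ_[p]]
    (μ : Measure ℤ_[p])
    (hμ_inv : ∀ (a : ℤ_[p]) (s : Set ℤ_[p]), μ ((a + ·) ⁻¹' s) = μ s)
    (hμ_norm : μ Set.univ = 1)
    (e : ℚ_[p] → ℂ)
    (he_add : ∀ x y, e (x + y) = e x * e y)
    (he_abs : ∀ x, ‖e x‖ = 1)
    (he_ker : ∀ x, e x = 1 ↔ ‖x‖ ≤ 1)
    (ξ₃ ξ₄ : ℚ_[p])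
    (h₃ : ξ₃ = 0 ∨ 1 ≤ ‖ξ₃‖) (h₄ : ξ₄ = 0 ∨ 1 ≤ ‖ξ₄‖) :
    ∫ x : ℤ_[p] × ℤ_[p],
        ‖∫ u : ℤ_[p],
          e ((ξ₃ * (x.1 : ℚ_[p]) + ξ₄ * (x.2 : ℚ_[p])) * (u : ℚ_[p]) +
            ξ₄ * (x.1 : ℚ_[p]) * (u : ℚ_[p]) ^ 2 / 2) ∂μ‖ ^ 2
        ∂(μ.prod μ) = (max (max ‖ξ₃‖ ‖ξ₄‖) 1)⁻¹ :=
  padic_oscillatory_L2_norm_general p hp μ hμ_inv hμ_norm e he_add he_abs he_ker ξ₃ ξ₄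
end

section
/- Let p be an odd prime, α > 0, and V ∈ ℤₚᵈ \ {0}. The directional Vladimirov–Taibleson operator ∂_V^α f(x) := c(α)·∫_{ℤₚ} (f(x−tV) − f(x))·|t|ₚ^{−(α+1)} dt with c(α) = (1−p^α)/(1−p^{−(α+1)}) applied to the character e_ξ(x) := e^{2πi{ξ·x}ₚ}, ξ ∈ (ℚₚ/ℤₚ)ᵈ, yields ∂_V^α e_ξ = λ·e_ξ where λ = 0 if V·ξ ∈ ℤₚ, and λ = |V·ξ|ₚ^α − (1−p^{−1})/(1−p^{−(α+1)}) otherwise. -/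
open MeasureTheory Metric Finset Filter Topology

/-!
Put `S = V·ξ`. The integrand is `e_ξ(x) · (ψ t - 1) · ‖t‖^{-(α+1)}`, where `ψ t = e(-tS)` is an
additive character of `ℤ_[p]` which is trivial exactly on the ball `p^m ℤ_[p]`, `‖S‖ = p^m`; if
`‖S‖ ≤ 1`, `ψ` is trivial and everything vanishes. Otherwise, off that ball, `‖t‖^{-s}` telescopes
into a combination of indicators of the balls `p^k ℤ_[p]`, `k < m`. On each of them `ψ` is
nontrivial, so translation invariance kills `∫ ψ` there and leaves `-μ(p^k ℤ_[p]) = -p^{-k}`, the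
ball being a subgroup of index `p^k`. What remains is a geometric series.
-/

theorem AddChar.isLocallyConstant_of_eventually_eq_one {G M : Type*} [AddGroup G]
    [TopologicalSpace G] [IsTopologicalAddGroup G] [Monoid M] (ψ : AddChar G M)
    (h : ∀ᶠ t in 𝓝 0, ψ t = 1) : IsLocallyConstant ψ := by
  refine (IsLocallyConstant.iff_eventually_eq ψ).2 fun x => ?_
  have hx : Tendsto (fun y => -x + y) (𝓝 x) (𝓝 0) := by
    simpa using ((continuous_const_add (-x)).tendsto x)
  filter_upwards [hx.eventually h] with y hy
  rw [← add_neg_cancel_left x y, ψ.map_add_eq_mul, hy, mul_one]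

theorem setIntegral_addChar_eq_zero {G : Type*} [AddGroup G] [MeasurableSpace G] [MeasurableAdd G]
    (μ : Measure G) [μ.IsAddLeftInvariant] {H : AddSubgroup G} (hH : MeasurableSet (H : Set G))
    (ψ : AddChar G ℂ) {a : G} (ha : a ∈ H) (hψa : ψ a ≠ 1) :
    ∫ t in H, ψ t ∂μ = 0 := by
  have hshift : ∀ t, (H : Set G).indicator ψ (a + t) = ψ a * (H : Set G).indicator ψ t := by
    intro t
    by_cases ht : t ∈ H
    · simp [ht, H.add_mem_cancel_left ha, ψ.map_add_eq_mul]
    · simp [ht, H.add_mem_cancel_left ha]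
  have hinv := integral_add_left_eq_self (μ := μ) ((H : Set G).indicator ψ) a
  simp only [hshift, integral_const_mul, integral_indicator hH] at hinv
  by_contra h
  exact hψa ((mul_eq_right₀ h).1 hinv)

theorem Padic.exists_norm_eq_pow_of_one_lt {p : ℕ} [Fact p.Prime] {x : ℚ_[p]} (hx : 1 < ‖x‖) :
    ∃ m : ℕ, 0 < m ∧ ‖x‖ = (p : ℝ) ^ m := by
  have hx0 : x ≠ 0 := by
    rintro rfl
    norm_num at hx
  have hp : (1 : ℝ) < p := by exact_mod_cast (Fact.out : p.Prime).one_lt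
  rw [Padic.norm_eq_zpow_neg_valuation hx0] at hx ⊢
  have hv : 0 < -x.valuation := (one_lt_zpow_iff_right₀ hp).1 hx
  refine ⟨(-x.valuation).toNat, by omega, ?_⟩
  rw [← zpow_natCast, Int.toNat_of_nonneg hv.le]

theorem one_sub_div_mul_neg_inv_sub_geom_sum {E q : ℝ} (hE : E ≠ 0) (hq : q ≠ 0) (hEq : E * q ≠ 1)
    (m : ℕ) :
    (1 - E) / (1 - (E * q)⁻¹) * (-(E * q)⁻¹ - (1 - (E * q)⁻¹) * ∑ k ∈ range m, E ^ k) =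
      E ^ m - (1 - q⁻¹) / (1 - (E * q)⁻¹) := by
  have hEq' : E * q - 1 ≠ 0 := sub_ne_zero.2 hEq
  have hD : 1 - (E * q)⁻¹ ≠ 0 := by
    rwa [Ne, sub_eq_zero, eq_comm, inv_eq_one]
  rw [mul_sub, ← mul_assoc, div_mul_cancel₀ _ hD, mul_neg_geom_sum]
  field_simp
  ring

namespace PadicInt

variable {p : ℕ} [Fact p.Prime]

theorem closedBall_zpow_eq_ker_toZModPow (k : ℕ) :
    closedBall (0 : ℤ_[p]) ((p : ℝ) ^ (-(k : ℤ))) =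
      ((toZModPow k : ℤ_[p] →+* ZMod (p ^ k)).toAddMonoidHom.ker : Set ℤ_[p]) := by
  ext t
  rw [mem_closedBall_zero_iff, norm_le_pow_iff_mem_span_pow, ← ker_toZModPow]
  rfl

theorem index_ker_toZModPow (k : ℕ) :
    (toZModPow k : ℤ_[p] →+* ZMod (p ^ k)).toAddMonoidHom.ker.index = p ^ k := by
  rw [AddSubgroup.index_ker, AddMonoidHom.range_eq_top_of_surjective _ (ZMod.ringHom_surjective _),
    AddSubgroup.card_top, Nat.card_zmod]

theorem norm_rpow_neg_eq_layer_sum {m : ℕ} {t : ℤ_[p]} (ht : (p : ℝ) ^ (-(m : ℤ)) < ‖t‖) (s : ℝ) :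
    ‖t‖ ^ (-s) = ((p : ℝ) ^ s)⁻¹ + (1 - ((p : ℝ) ^ s)⁻¹) * ∑ k ∈ range m,
      ((p : ℝ) ^ s) ^ k * (closedBall (0 : ℤ_[p]) ((p : ℝ) ^ (-(k : ℤ)))).indicator 1 t := by
  have hp : (0 : ℝ) < p := Nat.cast_pos.2 (Fact.out : p.Prime).pos
  have ht0 : t ≠ 0 := by
    rintro rfl
    rw [norm_zero] at ht
    exact (zpow_pos hp _).not_gt ht
  set n := t.valuation
  have hmem : ∀ k : ℕ, t ∈ closedBall (0 : ℤ_[p]) ((p : ℝ) ^ (-(k : ℤ))) ↔ k ≤ n := fun k =>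
    mem_closedBall_zero_iff.trans (norm_le_pow_iff_le_valuation t ht0 k)
  have hnm : n < m := by
    by_contra! h
    exact ht.not_ge (mem_closedBall_zero_iff.1 ((hmem m).2 h))
  have hnorm : ‖t‖ ^ (-s) = ((p : ℝ) ^ s) ^ n := by
    rw [norm_eq_zpow_neg_valuation ht0, ← Real.rpow_intCast, ← Real.rpow_mul hp.le,
      ← Real.rpow_natCast, ← Real.rpow_mul hp.le]
    congr 1
    push_cast
    rw [neg_mul_neg, mul_comm]
  have hlayers : ∑ k ∈ range m, ((p : ℝ) ^ s) ^ k *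
      (closedBall (0 : ℤ_[p]) ((p : ℝ) ^ (-(k : ℤ)))).indicator 1 t =
        ∑ k ∈ range (n + 1), ((p : ℝ) ^ s) ^ k := by
    classical
    simp only [Set.indicator_apply, hmem, Pi.one_apply, mul_ite, mul_one, mul_zero]
    rw [← sum_filter]
    congr 1
    ext k
    simp only [mem_filter, mem_range]
    omega
  have hr : (p : ℝ) ^ s ≠ 0 := (Real.rpow_pos_of_pos hp s).ne'
  rw [hnorm, hlayers]
  field_simp
  linear_combination (geom_sum_mul ((p : ℝ) ^ s) (n + 1)).symm

section Character

variable {ψ : AddChar ℤ_[p] ℂ} {m : ℕ} (hψ : ∀ t, ψ t = 1 ↔ ‖t‖ ≤ (p : ℝ) ^ (-(m : ℤ)))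
include hψ

theorem continuous_addChar_of_eq_one_iff : Continuous ψ := by
  refine (ψ.isLocallyConstant_of_eventually_eq_one ?_).continuous
  filter_upwards [closedBall_mem_nhds (0 : ℤ_[p])
    (zpow_pos (Nat.cast_pos.2 (Fact.out : p.Prime).pos) (-(m : ℤ)))] with t ht
  exact (hψ t).2 (mem_closedBall_zero_iff.1 ht)

theorem addChar_sub_one_mul_norm_rpow_neg_eq_layer_sum (s : ℝ) (t : ℤ_[p]) :
    (ψ t - 1) * ((‖t‖ ^ (-s) : ℝ) : ℂ) = ((((p : ℝ) ^ s)⁻¹ : ℝ) : ℂ) * (ψ t - 1) +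
      ∑ k ∈ range m, (((1 - ((p : ℝ) ^ s)⁻¹) * ((p : ℝ) ^ s) ^ k : ℝ) : ℂ) *
        (closedBall (0 : ℤ_[p]) ((p : ℝ) ^ (-(k : ℤ)))).indicator (fun t => ψ t - 1) t := by
  by_cases ht : ψ t = 1
  · have hzero : ∀ k : ℕ, (closedBall (0 : ℤ_[p]) ((p : ℝ) ^ (-(k : ℤ)))).indicator
        (fun t => ψ t - 1) t = 0 := fun k => Set.indicator_apply_eq_zero.2 fun _ => sub_eq_zero.2 ht
    simp only [ht, hzero, sub_self, zero_mul, mul_zero, sum_const_zero, add_zero]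
  rw [norm_rpow_neg_eq_layer_sum (not_le.1 (mt (hψ t).2 ht)) s, Complex.ofReal_add,
    Complex.ofReal_mul, Complex.ofReal_sum, mul_add, mul_sum, mul_sum]
  congr 1
  · push_cast
    ring
  refine sum_congr rfl fun k _ => ?_
  by_cases hk : t ∈ closedBall (0 : ℤ_[p]) ((p : ℝ) ^ (-(k : ℤ)))
  · simp only [Set.indicator_of_mem hk, Pi.one_apply]
    push_cast
    ring
  · simp only [Set.indicator_of_notMem hk]
    push_cast
    ring

end Character

variable [MeasurableSpace ℤ_[p]] [BorelSpace ℤ_[p]] (μ : Measure ℤ_[p]) [μ.IsAddLeftInvariant]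
  [IsProbabilityMeasure μ]

theorem measureReal_closedBall_zpow (k : ℕ) :
    μ.real (closedBall (0 : ℤ_[p]) ((p : ℝ) ^ (-(k : ℤ)))) = (p : ℝ) ^ (-(k : ℤ)) := by
  set H := (toZModPow k : ℤ_[p] →+* ZMod (p ^ k)).toAddMonoidHom.ker
  have : H.FiniteIndex :=
    ⟨by rw [index_ker_toZModPow]; exact (pow_pos (Fact.out : p.Prime).pos _).ne'⟩
  have hmul := H.index_mul_measure
    ((closedBall_zpow_eq_ker_toZModPow (p := p) k) ▸ measurableSet_closedBall) μ
  rw [index_ker_toZModPow, measure_univ, ← closedBall_zpow_eq_ker_toZModPow, mul_comm] at hmul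
  rw [measureReal_def, ENNReal.eq_inv_of_mul_eq_one_left hmul]
  simp

variable {ψ : AddChar ℤ_[p] ℂ} {m : ℕ} (hψ : ∀ t, ψ t = 1 ↔ ‖t‖ ≤ (p : ℝ) ^ (-(m : ℤ)))
include hψ

theorem setIntegral_closedBall_addChar_sub_one {k : ℕ} (hk : k < m) :
    ∫ t in closedBall (0 : ℤ_[p]) ((p : ℝ) ^ (-(k : ℤ))), (ψ t - 1) ∂μ =
      -(((p : ℝ) ^ (-(k : ℤ)) : ℝ) : ℂ) := by
  have hp : (1 : ℝ) < p := by exact_mod_cast (Fact.out : p.Prime).one_lt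
  have hint : Integrable ψ μ :=
    (continuous_addChar_of_eq_one_iff hψ).integrable_of_hasCompactSupport (.of_compactSpace _)
  have hpk : ‖(p : ℤ_[p]) ^ k‖ = (p : ℝ) ^ (-(k : ℤ)) := norm_p_pow k
  have hψpk : ψ ((p : ℤ_[p]) ^ k) ≠ 1 := by
    rw [Ne, hψ, hpk, zpow_le_zpow_iff_right₀ hp]
    omega
  have hzero : ∫ t in closedBall (0 : ℤ_[p]) ((p : ℝ) ^ (-(k : ℤ))), ψ t ∂μ = 0 :=
    setIntegral_addChar_eq_zero μ
      (H := IsUltrametricDist.closedBall_openAddSubgroup ℤ_[p] (zpow_pos (zero_lt_one.trans hp) _))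
      measurableSet_closedBall ψ (mem_closedBall_zero_iff.2 hpk.le) hψpk
  rw [integral_sub hint.integrableOn (integrableOn_const (by simp)), hzero, setIntegral_const,
    measureReal_closedBall_zpow]
  simp

theorem integral_addChar_sub_one_mul_norm_rpow_neg (hm : 0 < m) (s : ℝ) :
    ∫ t, (ψ t - 1) * ((‖t‖ ^ (-s) : ℝ) : ℂ) ∂μ =
      ((-((p : ℝ) ^ s)⁻¹ - (1 - ((p : ℝ) ^ s)⁻¹) *
        ∑ k ∈ range m, ((p : ℝ) ^ (s - 1)) ^ k : ℝ) : ℂ) := by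
  have hint : Integrable (fun t => ψ t - 1) μ :=
    ((continuous_addChar_of_eq_one_iff hψ).sub continuous_const).integrable_of_hasCompactSupport
      (.of_compactSpace _)
  have hint_ball : ∀ k : ℕ, Integrable
      ((closedBall (0 : ℤ_[p]) ((p : ℝ) ^ (-(k : ℤ)))).indicator (fun t => ψ t - 1)) μ :=
    fun k => hint.indicator measurableSet_closedBall
  have huniv : ∫ t, (ψ t - 1) ∂μ = -1 := by
    have hball : closedBall (0 : ℤ_[p]) 1 = Set.univ :=
      Set.eq_univ_of_forall fun t => mem_closedBall_zero_iff.2 t.norm_le_one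
    simpa [hball] using setIntegral_closedBall_addChar_sub_one μ hψ hm
  have hpow : ∀ k : ℕ, ((p : ℝ) ^ (s - 1)) ^ k = ((p : ℝ) ^ s) ^ k * (p : ℝ) ^ (-(k : ℤ)) :=
    fun k => by
      rw [Real.rpow_sub_one (Nat.cast_pos.2 (Fact.out : p.Prime).pos).ne', div_pow, zpow_neg,
        zpow_natCast, div_eq_mul_inv]
  simp_rw [addChar_sub_one_mul_norm_rpow_neg_eq_layer_sum hψ s]
  rw [integral_add (hint.const_mul _) (integrable_finsetSum _ fun k _ => (hint_ball k).const_mul _),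
    integral_const_mul, integral_finsetSum _ fun k _ => (hint_ball k).const_mul _, huniv]
  simp_rw [integral_const_mul, integral_indicator measurableSet_closedBall]
  rw [sum_congr rfl fun k hk => by
    rw [setIntegral_closedBall_addChar_sub_one μ hψ (mem_range.1 hk)]]
  simp_rw [hpow]
  push_cast
  simp only [mul_sum, mul_neg, sum_neg_distrib, mul_assoc]
  ring

theorem vladimirov_constant_mul_integral_addChar {α : ℝ} (hα : 0 < α) (hm : 0 < m) :
    (((1 - (p : ℝ) ^ α) / (1 - (p : ℝ) ^ (-(α + 1))) : ℝ) : ℂ) *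
        ∫ t, (ψ t - 1) * ((‖t‖ ^ (-(α + 1)) : ℝ) : ℂ) ∂μ =
      ((((p : ℝ) ^ m) ^ α - (1 - (p : ℝ)⁻¹) / (1 - (p : ℝ) ^ (-(α + 1))) : ℝ) : ℂ) := by
  have hp : (1 : ℝ) < p := by exact_mod_cast (Fact.out : p.Prime).one_lt
  rw [integral_addChar_sub_one_mul_norm_rpow_neg μ hψ hm, ← Complex.ofReal_mul,
    add_sub_cancel_right, Real.rpow_neg (by positivity), Real.rpow_add_one (by positivity),
    ← Real.rpow_pow_comm (by positivity), one_sub_div_mul_neg_inv_sub_geom_sum (by positivity)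
      (by positivity) (one_lt_mul_of_le_of_lt (Real.one_le_rpow hp.le hα.le) hp).ne']

end PadicInt

theorem directionalVT_on_character_general (p : ℕ) [Fact p.Prime]
    [MeasurableSpace ℤ_[p]] [BorelSpace ℤ_[p]]
    (μ : Measure ℤ_[p])
    (hμ_inv : ∀ (a : ℤ_[p]) (s : Set ℤ_[p]), μ ((a + ·) ⁻¹' s) = μ s)
    (hμ_norm : μ Set.univ = 1)
    (e : ℚ_[p] → ℂ)
    (he_add : ∀ x y, e (x + y) = e x * e y)
    (he_ker : ∀ x, e x = 1 ↔ ‖x‖ ≤ 1)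
    (α : ℝ) (hα : 0 < α)
    (d : ℕ) (V : Fin d → ℤ_[p])
    (ξ : Fin d → ℚ_[p]) (x : Fin d → ℤ_[p]) :
    (((1 - (p : ℝ) ^ α) / (1 - (p : ℝ) ^ (-(α + 1))) : ℝ) : ℂ) *
        ∫ t : ℤ_[p],
          (e (∑ i, ξ i * ((x i - t * V i : ℤ_[p]) : ℚ_[p])) -
              e (∑ i, ξ i * ((x i : ℤ_[p]) : ℚ_[p]))) *
            ((‖t‖ ^ (-(α + 1)) : ℝ) : ℂ) ∂μ =
      Complex.ofReal
          (if ‖∑ i, (V i : ℚ_[p]) * ξ i‖ ≤ 1 then (0 : ℝ)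
            else ‖∑ i, (V i : ℚ_[p]) * ξ i‖ ^ α -
              (1 - (p : ℝ)⁻¹) / (1 - (p : ℝ) ^ (-(α + 1)))) *
        e (∑ i, ξ i * ((x i : ℤ_[p]) : ℚ_[p])) := by
  have : IsProbabilityMeasure μ := ⟨hμ_norm⟩
  have : μ.IsAddLeftInvariant := ⟨fun a => Measure.ext fun s hs => by
    rw [Measure.map_apply (measurable_const_add a) hs, hμ_inv]⟩
  set S := ∑ i, (V i : ℚ_[p]) * ξ i
  set w := ∑ i, ξ i * ((x i : ℤ_[p]) : ℚ_[p])
  let ψ : AddChar ℤ_[p] ℂ := (AddChar.mk e ((he_ker 0).2 (by simp)) he_add).compAddMonoidHom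
    ((AddMonoidHom.mulRight (-S)).comp PadicInt.Coe.ringHom.toAddMonoidHom)
  have hψ : ∀ t, ψ t = 1 ↔ ‖t‖ * ‖S‖ ≤ 1 := fun t => by
    change e ((t : ℚ_[p]) * -S) = 1 ↔ _
    rw [he_ker, norm_mul, norm_neg, PadicInt.padic_norm_e_of_padicInt]
  have hshift : ∀ t : ℤ_[p], e (∑ i, ξ i * ((x i - t * V i : ℤ_[p]) : ℚ_[p])) = e w * ψ t := by
    intro t
    change _ = e w * e ((t : ℚ_[p]) * -S)
    rw [← he_add]
    simp only [w, S, PadicInt.coe_sub, PadicInt.coe_mul, mul_sub, sum_sub_distrib, mul_neg, mul_sum,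
      ← sub_eq_add_neg, mul_left_comm (t : ℚ_[p]), mul_comm (V _ : ℚ_[p])]
  simp_rw [hshift, ← mul_sub_one, mul_assoc]
  rw [integral_const_mul]
  split_ifs with hS
  · have hψ1 : ∀ t, ψ t = 1 := fun t =>
      (hψ t).2 (mul_le_one₀ (PadicInt.norm_le_one t) (norm_nonneg _) hS)
    simp [hψ1]
  obtain ⟨m, hm, hSm⟩ := Padic.exists_norm_eq_pow_of_one_lt (not_le.1 hS)
  have hψm : ∀ t, ψ t = 1 ↔ ‖t‖ ≤ (p : ℝ) ^ (-(m : ℤ)) := fun t => by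
    rw [hψ, zpow_neg, zpow_natCast, ← hSm, inv_eq_one_div,
      le_div_iff₀ (zero_lt_one.trans (not_le.1 hS))]
  rw [mul_left_comm, PadicInt.vladimirov_constant_mul_integral_addChar μ hψm hα hm, hSm, mul_comm]

/-- the directional Vladimirov–Taibleson operator
`∂_V^α f(x) := c(α)·∫_{ℤₚ} (f(x−tV) − f(x))·|t|ₚ^{−(α+1)} dt`, with
`c(α) = (1−p^α)/(1−p^{−(α+1)})`, applied to the character
`e_ξ(x) = e^{2πi{ξ·x}ₚ}` yields `∂_V^α e_ξ = λ·e_ξ`, where `λ = 0` if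
`V·ξ ∈ ℤₚ` and `λ = |V·ξ|ₚ^α − (1−p^{−1})/(1−p^{−(α+1)})` otherwise. -/
theorem directionalVT_on_character (p : ℕ) [Fact p.Prime] (hp : Odd p)
    [MeasurableSpace ℤ_[p]] [BorelSpace ℤ_[p]]
    (μ : Measure ℤ_[p])
    (hμ_inv : ∀ (a : ℤ_[p]) (s : Set ℤ_[p]), μ ((a + ·) ⁻¹' s) = μ s)
    (hμ_norm : μ Set.univ = 1)
    (e : ℚ_[p] → ℂ)
    (he_add : ∀ x y, e (x + y) = e x * e y)
    (he_abs : ∀ x, ‖e x‖ = 1)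
    (he_ker : ∀ x, e x = 1 ↔ ‖x‖ ≤ 1)
    (α : ℝ) (hα : 0 < α)
    (d : ℕ) (V : Fin d → ℤ_[p]) (hV : V ≠ 0)
    (ξ : Fin d → ℚ_[p]) (x : Fin d → ℤ_[p]) :
    (((1 - (p : ℝ) ^ α) / (1 - (p : ℝ) ^ (-(α + 1))) : ℝ) : ℂ) *
        ∫ t : ℤ_[p],
          (e (∑ i, ξ i * ((x i - t * V i : ℤ_[p]) : ℚ_[p])) -
              e (∑ i, ξ i * ((x i : ℤ_[p]) : ℚ_[p]))) *
            ((‖t‖ ^ (-(α + 1)) : ℝ) : ℂ) ∂μ =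
      Complex.ofReal
          (if ‖∑ i, (V i : ℚ_[p]) * ξ i‖ ≤ 1 then (0 : ℝ)
            else ‖∑ i, (V i : ℚ_[p]) * ξ i‖ ^ α -
              (1 - (p : ℝ)⁻¹) / (1 - (p : ℝ) ^ (-(α + 1)))) *
        e (∑ i, ξ i * ((x i : ℤ_[p]) : ℚ_[p])) :=
  directionalVT_on_character_general p μ hμ_inv hμ_norm e he_add he_ker α hα d V ξ x
end

section
/- Let p be an odd prime. For a,b ∈ ℚₚ with |a|ₚ > 1 and |b/a|ₚ ≤ 1, the Gaussian integral ∫_{ℤₚ} e^{2πi{au²+bu}ₚ} du has absolute value |a|ₚ^{−1/2}. -/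
/-!
Write `‖a‖ = p ^ k`. As `‖b‖ ≤ ‖a‖`, the phase `u ↦ e(a u² + b u)` only depends on `u` modulo
`p ^ k`, and the normalised Haar measure pushes forward to the uniform measure on `ℤ/p^k`, so the
integral is `p ^ (-k)` times the Gauss sum `S = ∑_{x mod p^k} e(a x² + b x)`. Expanding `|S|²` and
substituting `x = w + y` leaves `∑_w e(a w² + b w) ∑_y e(2 a w y)`. Since `p` is odd, `‖2 a w‖ > 1`
for `w ≢ 0`, so the inner character sum vanishes unless `w = 0`, and `|S|² = p ^ k`.
-/

open MeasureTheory
open scoped ENNReal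

section UniformPushforward

variable {G F E : Type*} [AddGroup G] [MeasurableSpace G] [AddGroup F] [Fintype F]
  [MeasurableSpace F] [MeasurableSingletonClass F] [NormedAddCommGroup E] [NormedSpace ℝ E]
  [CompleteSpace E] {μ : Measure G} [IsProbabilityMeasure μ] {π : G →+ F}

theorem measure_preimage_singleton_eq_inv_card (hμ : ∀ a s, μ ((a + ·) ⁻¹' s) = μ s)
    (hπ : Measurable π) (hsurj : Function.Surjective π) (x : F) :
    μ (π ⁻¹' {x}) = (Fintype.card F : ℝ≥0∞)⁻¹ := by
  have fiber_eq : ∀ x, μ (π ⁻¹' {x}) = μ (π ⁻¹' {0}) := by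
    intro x
    obtain ⟨c, rfl⟩ := hsurj x
    rw [← hμ c]
    congr 1
    ext u
    simp
  have total : ∑ x, μ (π ⁻¹' {x}) = 1 := by
    rw [sum_measure_preimage_singleton _ fun y _ => hπ (measurableSet_singleton y),
      Finset.coe_univ, Set.preimage_univ, measure_univ]
  simp only [fiber_eq, Finset.sum_const, Finset.card_univ, nsmul_eq_mul] at total
  rw [fiber_eq]
  exact ENNReal.eq_inv_of_mul_eq_one_left (by rwa [mul_comm] at total)

theorem map_eq_inv_card_smul_count (hμ : ∀ a s, μ ((a + ·) ⁻¹' s) = μ s)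
    (hπ : Measurable π) (hsurj : Function.Surjective π) :
    μ.map π = (Fintype.card F : ℝ≥0∞)⁻¹ • Measure.count := by
  refine Measure.ext_of_singleton fun x => ?_
  rw [Measure.map_apply hπ (measurableSet_singleton x),
    measure_preimage_singleton_eq_inv_card hμ hπ hsurj, Measure.smul_apply,
    Measure.count_singleton, smul_eq_mul, mul_one]

theorem integral_comp_eq_inv_card_smul_sum (hμ : ∀ a s, μ ((a + ·) ⁻¹' s) = μ s)
    (hπ : Measurable π) (hsurj : Function.Surjective π) (g : F → E) :
    ∫ u, g (π u) ∂μ = (Fintype.card F : ℝ)⁻¹ • ∑ x, g x := by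
  rw [← integral_map hπ.aemeasurable StronglyMeasurable.of_discrete.aestronglyMeasurable,
    map_eq_inv_card_smul_count hμ hπ hsurj, integral_smul_measure, integral_count,
    ENNReal.toReal_inv, ENNReal.toReal_natCast]

end UniformPushforward

theorem norm_sum_sq_eq_card {F : Type*} [AddGroup F] [Fintype F] (q : F → ℂ)
    (hq : ∀ x, ‖q x‖ = 1) (B : F → AddChar F ℂ)
    (hqB : ∀ x y, q (x + y) = q x * q y * B x y) (hB : ∀ x, x ≠ 0 → B x ≠ 0) :
    ‖∑ x, q x‖ ^ 2 = Fintype.card F := by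
  classical
  have q_ne_zero : ∀ x, q x ≠ 0 := fun x => norm_ne_zero_iff.mp ((hq x).trans_ne one_ne_zero)
  have q_mul_conj : ∀ y, q y * starRingEnd ℂ (q y) = 1 := by
    intro y
    rw [Complex.mul_conj', hq]
    simp
  have q_zero : q 0 = 1 := by
    have h := hqB 0 0
    rw [add_zero, AddChar.map_zero_eq_one, mul_one] at h
    exact (mul_eq_left₀ (q_ne_zero 0)).mp h.symm
  have B_zero : B 0 = 0 := by
    ext y
    have h := hqB 0 y
    rw [zero_add, q_zero, one_mul] at h
    exact (mul_eq_left₀ (q_ne_zero y)).mp h.symm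
  have character_sum : ∀ x, ∑ y, B x y = if x = 0 then (Fintype.card F : ℂ) else 0 := by
    intro x
    split_ifs with hx
    · rw [AddChar.sum_eq_ite, if_pos (hx ▸ B_zero)]
    · rw [AddChar.sum_eq_ite, if_neg (hB x hx)]
  have : ((‖∑ x, q x‖ ^ 2 : ℝ) : ℂ) = Fintype.card F := by
    calc ((‖∑ x, q x‖ ^ 2 : ℝ) : ℂ)
        = ∑ y, ∑ x, q x * starRingEnd ℂ (q y) := by
          push_cast
          rw [← Complex.mul_conj', map_sum, Finset.sum_mul_sum, Finset.sum_comm]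
      _ = ∑ y, ∑ x, q (x + y) * starRingEnd ℂ (q y) := by
          refine Finset.sum_congr rfl fun y _ => ?_
          exact (Fintype.sum_equiv (Equiv.addRight y) _ _ fun x => rfl).symm
      _ = ∑ x, q x * ∑ y, B x y := by
          rw [Finset.sum_comm]
          refine Finset.sum_congr rfl fun x _ => ?_
          rw [Finset.mul_sum]
          refine Finset.sum_congr rfl fun y _ => ?_
          rw [hqB, mul_right_comm (q x * q y), mul_assoc (q x) (q y), q_mul_conj]
          ring
      _ = Fintype.card F := by
          simp [character_sum, q_zero]
  exact_mod_cast this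

theorem Padic.exists_norm_eq_pow_of_one_le {p : ℕ} [Fact p.Prime] {x : ℚ_[p]} (hx : 1 ≤ ‖x‖) :
    ∃ k : ℕ, ‖x‖ = (p : ℝ) ^ k := by
  have hp : (1 : ℝ) < p := by exact_mod_cast (Fact.out : p.Prime).one_lt
  have hx0 : x ≠ 0 := by
    rintro rfl
    norm_num at hx
  rw [Padic.norm_eq_zpow_neg_valuation hx0, one_le_zpow_iff_right₀ hp] at hx
  obtain ⟨k, hk⟩ := Int.eq_ofNat_of_zero_le hx
  exact ⟨k, by rw [Padic.norm_eq_zpow_neg_valuation hx0, hk, zpow_natCast]⟩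

namespace PadicInt

variable {p : ℕ} [Fact p.Prime] {k : ℕ}

theorem toZModPow_eq_iff_norm_sub_le {u v : ℤ_[p]} :
    toZModPow k u = toZModPow k v ↔ ‖u - v‖ ≤ (p : ℝ) ^ (-k : ℤ) := by
  rw [norm_le_pow_iff_mem_span_pow, ← ker_toZModPow, RingHom.mem_ker, map_sub, sub_eq_zero]

theorem toZModPow_natCast_val (x : ZMod (p ^ k)) : toZModPow k (x.val : ℤ_[p]) = x := by
  simp

theorem toZModPow_surjective : Function.Surjective (toZModPow k : ℤ_[p] → ZMod (p ^ k)) :=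
  fun x => ⟨x.val, toZModPow_natCast_val x⟩

theorem measurable_toZModPow [MeasurableSpace ℤ_[p]] [BorelSpace ℤ_[p]] :
    Measurable (toZModPow k : ℤ_[p] → ZMod (p ^ k)) := by
  refine measurable_to_countable' fun x => ?_
  have : toZModPow k ⁻¹' {x} = Metric.closedBall (x.val : ℤ_[p]) ((p : ℝ) ^ (-k : ℤ)) := by
    ext u
    rw [Set.mem_preimage, Set.mem_singleton_iff, Metric.mem_closedBall, dist_eq_norm,
      ← toZModPow_eq_iff_norm_sub_le, toZModPow_natCast_val]
  rw [this]
  exact measurableSet_closedBall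

theorem norm_mul_sub_le_one_of_toZModPow_eq {c : ℚ_[p]} (hc : ‖c‖ ≤ (p : ℝ) ^ k)
    {u v : ℤ_[p]} (h : toZModPow k u = toZModPow k v) : ‖c * ((u : ℚ_[p]) - v)‖ ≤ 1 := by
  have hp : (0 : ℝ) < p := by exact_mod_cast (Fact.out : p.Prime).pos
  rw [toZModPow_eq_iff_norm_sub_le] at h
  calc ‖c * ((u : ℚ_[p]) - v)‖ = ‖c‖ * ‖u - v‖ := by rw [norm_mul, ← coe_sub, norm_def]
    _ ≤ (p : ℝ) ^ k * (p : ℝ) ^ (-k : ℤ) := by gcongr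
    _ = 1 := by rw [zpow_neg, zpow_natCast, mul_inv_cancel₀ (by positivity)]

end PadicInt

open PadicInt

section Conductor

variable {p : ℕ} [Fact p.Prime] {k : ℕ} {ψ : AddChar ℚ_[p] ℂ} (hψ : ∀ x, ψ x = 1 ↔ ‖x‖ ≤ 1)
include hψ

theorem addChar_eq_of_norm_sub_le_one {x y : ℚ_[p]} (h : ‖x - y‖ ≤ 1) : ψ x = ψ y := by
  rw [← sub_add_cancel x y, AddChar.map_add_eq_mul, (hψ _).2 h, one_mul]

theorem addChar_mul_eq_of_toZModPow_eq {c : ℚ_[p]} (hc : ‖c‖ ≤ (p : ℝ) ^ k) {u v : ℤ_[p]}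
    (h : toZModPow k u = toZModPow k v) : ψ (c * u) = ψ (c * v) := by
  refine addChar_eq_of_norm_sub_le_one hψ ?_
  rw [← mul_sub]
  exact norm_mul_sub_le_one_of_toZModPow_eq hc h

theorem addChar_quadratic_eq_of_toZModPow_eq {a b : ℚ_[p]} (ha : ‖a‖ ≤ (p : ℝ) ^ k)
    (hb : ‖b‖ ≤ (p : ℝ) ^ k) {u v : ℤ_[p]} (h : toZModPow k u = toZModPow k v) :
    ψ (a * (u : ℚ_[p]) ^ 2 + b * u) = ψ (a * (v : ℚ_[p]) ^ 2 + b * v) := by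
  refine addChar_eq_of_norm_sub_le_one hψ ?_
  have hc : ‖a * ((u : ℚ_[p]) + v) + b‖ ≤ (p : ℝ) ^ k := by
    refine (Padic.nonarchimedean _ _).trans (max_le ?_ hb)
    rw [norm_mul, ← coe_add, ← norm_def]
    exact (mul_le_of_le_one_right (norm_nonneg a) (norm_le_one _)).trans ha
  convert norm_mul_sub_le_one_of_toZModPow_eq hc h using 2
  ring

noncomputable def mulShiftZModPow {c : ℚ_[p]} (hc : ‖c‖ ≤ (p : ℝ) ^ k) :
    AddChar (ZMod (p ^ k)) ℂ where
  toFun x := ψ (c * (x.val : ℤ_[p]))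
  map_zero_eq_one' := by simp
  map_add_eq_mul' x y := by
    rw [← AddChar.map_add_eq_mul, ← mul_add, ← coe_add]
    exact addChar_mul_eq_of_toZModPow_eq hψ hc (by simp)

theorem mulShiftZModPow_toZModPow {c : ℚ_[p]} (hc : ‖c‖ ≤ (p : ℝ) ^ k) (u : ℤ_[p]) :
    mulShiftZModPow hψ hc (toZModPow k u) = ψ (c * u) :=
  addChar_mul_eq_of_toZModPow_eq hψ hc (toZModPow_natCast_val _)

end Conductor

section QuadraticGaussSum

variable {p : ℕ} [Fact p.Prime] {k : ℕ} {ψ : AddChar ℚ_[p] ℂ} (hψ : ∀ x, ψ x = 1 ↔ ‖x‖ ≤ 1)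
  (hψ_abs : ∀ x, ‖ψ x‖ = 1)
include hψ hψ_abs

theorem norm_quadraticGaussSum_sq (hp : p ≠ 2) {a b : ℚ_[p]} (ha : ‖a‖ = (p : ℝ) ^ k)
    (q : ZMod (p ^ k) → ℂ)
    (hq : ∀ u : ℤ_[p], q (toZModPow k u) = ψ (a * (u : ℚ_[p]) ^ 2 + b * u)) :
    ‖∑ x, q x‖ ^ 2 = (p : ℝ) ^ k := by
  have norm_two : ‖(2 : ℚ_[p])‖ = 1 := by
    simpa using Padic.norm_natCast_eq_one_iff.2 ((Nat.coprime_primes Fact.out Nat.prime_two).2 hp)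
  have norm_two_mul : ∀ u : ℤ_[p], ‖2 * a * u‖ = (p : ℝ) ^ k * ‖u‖ := by
    intro u
    rw [norm_mul, norm_mul, norm_two, one_mul, ha, norm_def]
  have norm_two_mul_le : ∀ u : ℤ_[p], ‖2 * a * u‖ ≤ (p : ℝ) ^ k := fun u =>
    (norm_two_mul u).trans_le (mul_le_of_le_one_right (by positivity) (norm_le_one u))
  let B : ZMod (p ^ k) → AddChar (ZMod (p ^ k)) ℂ := fun x =>
    mulShiftZModPow hψ (norm_two_mul_le (x.val : ℤ_[p]))
  have B_apply : ∀ u v : ℤ_[p], B (toZModPow k u) (toZModPow k v) = ψ (2 * a * u * v) := by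
    intro u v
    calc B (toZModPow k u) (toZModPow k v)
        = ψ (2 * a * v * ((toZModPow k u).val : ℤ_[p])) := by
          rw [mulShiftZModPow_toZModPow]
          ring_nf
      _ = ψ (2 * a * v * u) :=
          addChar_mul_eq_of_toZModPow_eq hψ (norm_two_mul_le v) (toZModPow_natCast_val _)
      _ = ψ (2 * a * u * v) := by ring_nf
  have := norm_sum_sq_eq_card q ?_ B ?_ ?_
  · rwa [ZMod.card, Nat.cast_pow] at this
  · intro x
    obtain ⟨u, rfl⟩ := toZModPow_surjective x
    rw [hq, hψ_abs]
  · intro x y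
    obtain ⟨u, rfl⟩ := toZModPow_surjective x
    obtain ⟨v, rfl⟩ := toZModPow_surjective y
    rw [← map_add, hq, hq, hq, B_apply, ← AddChar.map_add_eq_mul, ← AddChar.map_add_eq_mul]
    congr 1
    push_cast
    ring
  · intro x hx hB
    obtain ⟨u, rfl⟩ := toZModPow_surjective x
    have h := DFunLike.congr_fun hB (toZModPow k 1)
    rw [B_apply, coe_one, mul_one, AddChar.zero_apply, hψ, norm_two_mul] at h
    refine hx ?_
    have hpk : (0 : ℝ) < (p : ℝ) ^ k := pow_pos (mod_cast (Fact.out : p.Prime).pos) k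
    rwa [← map_zero (toZModPow (p := p) k), toZModPow_eq_iff_norm_sub_le, sub_zero, zpow_neg,
      zpow_natCast, ← mul_one (_ ^ k)⁻¹, le_inv_mul_iff₀ hpk]

theorem norm_integral_quadraticPhase_sq [MeasurableSpace ℤ_[p]] [BorelSpace ℤ_[p]]
    {μ : Measure ℤ_[p]} [IsProbabilityMeasure μ] (hμ : ∀ a s, μ ((a + ·) ⁻¹' s) = μ s) (hp : p ≠ 2) {a b : ℚ_[p]}
    (ha : ‖a‖ = (p : ℝ) ^ k) (hb : ‖b‖ ≤ (p : ℝ) ^ k) :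
    ‖∫ u : ℤ_[p], ψ (a * (u : ℚ_[p]) ^ 2 + b * u) ∂μ‖ ^ 2 = ‖a‖⁻¹ := by
  set Φ : ℤ_[p] → ℂ := fun u => ψ (a * (u : ℚ_[p]) ^ 2 + b * u)
  set q : ZMod (p ^ k) → ℂ := fun x => Φ (x.val : ℤ_[p])
  have hq : ∀ u, q (toZModPow k u) = Φ u := fun u =>
    addChar_quadratic_eq_of_toZModPow_eq hψ ha.le hb (toZModPow_natCast_val _)
  have hint := integral_comp_eq_inv_card_smul_sum hμ (π := (toZModPow k).toAddMonoidHom)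
    measurable_toZModPow toZModPow_surjective q
  have hp_pos : (0 : ℝ) < p := by exact_mod_cast (Fact.out : p.Prime).pos
  calc ‖∫ u, Φ u ∂μ‖ ^ 2 = ‖(Fintype.card (ZMod (p ^ k)) : ℝ)⁻¹ • ∑ x, q x‖ ^ 2 := by
        rw [← hint]
        simp only [RingHom.toAddMonoidHom_eq_coe, AddMonoidHom.coe_coe, hq]
    _ = ‖a‖⁻¹ := by
        rw [norm_smul, mul_pow, norm_quadraticGaussSum_sq hψ hψ_abs hp ha q hq, ZMod.card,
          ha, Nat.cast_pow, norm_inv, Real.norm_eq_abs, abs_of_pos (by positivity)]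
        field_simp

end QuadraticGaussSum

/-- for an odd prime `p` and `a, b ∈ ℚₚ` with `|a|ₚ > 1` and
`|b/a|ₚ ≤ 1`, the p-adic Gaussian integral `∫_{ℤₚ} e^{2πi{au²+bu}ₚ} du` has
absolute value `|a|ₚ^{−1/2}`. -/
theorem padic_gaussian_integral_abs (p : ℕ) [Fact p.Prime] (hp : Odd p)
    [MeasurableSpace ℤ_[p]] [BorelSpace ℤ_[p]]
    (μ : Measure ℤ_[p])
    (hμ_inv : ∀ (a : ℤ_[p]) (s : Set ℤ_[p]), μ ((a + ·) ⁻¹' s) = μ s)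
    (hμ_norm : μ Set.univ = 1)
    (e : ℚ_[p] → ℂ)
    (he_add : ∀ x y, e (x + y) = e x * e y)
    (he_abs : ∀ x, ‖e x‖ = 1)
    (he_ker : ∀ x, e x = 1 ↔ ‖x‖ ≤ 1)
    (a b : ℚ_[p]) (ha : 1 < ‖a‖) (hba : ‖b / a‖ ≤ 1) :
    ‖∫ u : ℤ_[p], e (a * (u : ℚ_[p]) ^ 2 + b * (u : ℚ_[p])) ∂μ‖ =
      ‖a‖ ^ (-(1 / 2 : ℝ)) := by
  let ψ : AddChar ℚ_[p] ℂ :=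
    { toFun := e, map_zero_eq_one' := (he_ker 0).2 (by simp), map_add_eq_mul' := he_add }
  have : IsProbabilityMeasure μ := ⟨hμ_norm⟩
  obtain ⟨k, hk⟩ := Padic.exists_norm_eq_pow_of_one_le ha.le
  have hb : ‖b‖ ≤ ‖a‖ := by rwa [norm_div, div_le_one (by linarith)] at hba
  have hsq := norm_integral_quadraticPhase_sq (ψ := ψ) he_ker he_abs hμ_inv
    (hp.ne_two_of_dvd_nat dvd_rfl) hk (hk ▸ hb)
  rw [Real.rpow_neg (norm_nonneg a), ← Real.sqrt_eq_rpow, ← Real.sqrt_inv, ← hsq,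
    Real.sqrt_sq (norm_nonneg _)]
  rfl
end

section
/- Let p be an odd prime and a, b ∈ ℚₚ with |a|ₚ > 1 and |b/a|ₚ > 1. Then ∫_{ℤₚ} e^{2πi{au²+bu}ₚ} du = 0. -/
open MeasureTheory
open scoped Classical

/-!
Since `‖a‖ > 1`, the translation `c := a⁻¹` lies in `ℤ_[p]`, and
`a (u + c)² + b (u + c) = (a u² + b u) + b / a + (2 u + c)` with `2 u + c ∈ ℤ_[p]` in the kernel
of `e`. Translation invariance of `μ` then gives `I = e (b / a) * I` for the integral `I`, and
`e (b / a) ≠ 1` because `‖b / a‖ > 1`.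
-/

theorem MeasureTheory.Measure.isAddLeftInvariant_of_preimage_add_left {G : Type*} [Add G]
    [MeasurableSpace G] [MeasurableAdd G] {μ : Measure G}
    (h : ∀ (g : G) (s : Set G), μ ((g + ·) ⁻¹' s) = μ s) : μ.IsAddLeftInvariant :=
  ⟨fun g => Measure.ext fun s hs => by rw [Measure.map_apply (measurable_const_add g) hs, h]⟩

theorem MeasureTheory.integral_eq_zero_of_add_left_eq_mul {G 𝕜 : Type*} [AddGroup G]
    [MeasurableSpace G] [MeasurableAdd G] [RCLike 𝕜] (μ : Measure G) [μ.IsAddLeftInvariant]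
    {f : G → 𝕜} {c : G} {ζ : 𝕜} (hζ : ζ ≠ 1) (hf : ∀ u, f (c + u) = ζ * f u) :
    ∫ u, f u ∂μ = 0 := by
  have h : ∫ u, f u ∂μ = ζ * ∫ u, f u ∂μ := by
    rw [← integral_const_mul, ← integral_add_left_eq_self f c]
    simp only [hf]
  have : (ζ - 1) * ∫ u, f u ∂μ = 0 := by rw [sub_mul, one_mul, ← h, sub_self]
  exact (mul_eq_zero.mp this).resolve_left (sub_ne_zero.mpr hζ)

theorem padic_gaussian_integral_zero_general (p : ℕ) [Fact p.Prime]
    [MeasurableSpace ℤ_[p]] [BorelSpace ℤ_[p]]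
    (μ : Measure ℤ_[p])
    (hμ_inv : ∀ (a : ℤ_[p]) (s : Set ℤ_[p]), μ ((a + ·) ⁻¹' s) = μ s)
    (e : ℚ_[p] → ℂ)
    (he_add : ∀ x y, e (x + y) = e x * e y)
    (he_ker : ∀ x, e x = 1 ↔ ‖x‖ ≤ 1)
    (a b : ℚ_[p]) (ha : 1 < ‖a‖) (hba : 1 < ‖b / a‖) :
    ∫ u : ℤ_[p], e (a * (u : ℚ_[p]) ^ 2 + b * (u : ℚ_[p])) ∂μ = 0 := by
  have ha₀ : a ≠ 0 := norm_pos_iff.mp (one_pos.trans ha)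
  let c : ℤ_[p] := ⟨a⁻¹, by rw [norm_inv]; exact inv_le_one_of_one_le₀ ha.le⟩
  have : μ.IsAddLeftInvariant := Measure.isAddLeftInvariant_of_preimage_add_left hμ_inv
  have hζ : e (b / a) ≠ 1 := fun h => hba.not_ge ((he_ker _).mp h)
  refine integral_eq_zero_of_add_left_eq_mul μ (c := c) hζ fun u => ?_
  have hshift : a * ((c + u : ℤ_[p]) : ℚ_[p]) ^ 2 + b * ((c + u : ℤ_[p]) : ℚ_[p])
      = b / a + (a * (u : ℚ_[p]) ^ 2 + b * u) + ((2 * u + c : ℤ_[p]) : ℚ_[p]) := by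
    have hc : (c : ℚ_[p]) = a⁻¹ := rfl
    have h2 : ((2 : ℤ_[p]) : ℚ_[p]) = 2 := map_ofNat PadicInt.Coe.ringHom 2
    push_cast [hc, h2]
    field_simp
    ring
  rw [hshift, he_add, he_add, (he_ker _).mpr (PadicInt.norm_le_one _), mul_one]

/-- for an odd prime `p` and `a, b ∈ ℚₚ` with `|a|ₚ > 1` and
`|b/a|ₚ > 1`, the p-adic Gaussian integral `∫_{ℤₚ} e^{2πi{au²+bu}ₚ} du`
vanishes. -/
theorem padic_gaussian_integral_zero (p : ℕ) [Fact p.Prime] (hp : Odd p)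
    [MeasurableSpace ℤ_[p]] [BorelSpace ℤ_[p]]
    (μ : Measure ℤ_[p])
    (hμ_inv : ∀ (a : ℤ_[p]) (s : Set ℤ_[p]), μ ((a + ·) ⁻¹' s) = μ s)
    (hμ_norm : μ Set.univ = 1)
    (e : ℚ_[p] → ℂ)
    (he_add : ∀ x y, e (x + y) = e x * e y)
    (he_abs : ∀ x, ‖e x‖ = 1)
    (he_ker : ∀ x, e x = 1 ↔ ‖x‖ ≤ 1)
    (a b : ℚ_[p]) (ha : 1 < ‖a‖) (hba : 1 < ‖b / a‖) :
    ∫ u : ℤ_[p], e (a * (u : ℚ_[p]) ^ 2 + b * (u : ℚ_[p])) ∂μ = 0 :=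
  padic_gaussian_integral_zero_general p μ hμ_inv e he_add he_ker a b ha hba
end
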